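/- Consider the Dickson nearfield setup and R-subgroups. Let m be a positive integer and let T be an R-subgroup of F^m with seed number s(T) = 2. Then |T| = (q^n)^k for an integer k (the R-dimension of T) satisfying 2 ≤ k ≤ q^n + 1. -/

import Mathlib

/-- `(q, n)` is a Dickson pair: `q` is a prime power, every prime divisor of `n`
divides `q - 1`, and if `q ≡ 3 (mod 4)` then `4` does not divide `n`. -/
def IsDicksonPair (q n : ℕ) : Prop :=
  0 < q ∧ 0 < n ∧ (∃ p l : ℕ, Nat.Prime p ∧ 0 < l ∧ q = p ^ l) ∧
    (∀ p : ℕ, Nat.Prime p → p ∣ n → p ∣ q - 1) ∧ (q % 4 = 3 → ¬ 4 ∣ n)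

/-- `[k]_q = 1 + q + q^2 + ⋯ + q^(k-1)`. -/
def dq (q k : ℕ) : ℕ := ∑ i ∈ Finset.range k, q ^ i

/-- `x` lies in the coset `g^([k]_q) • H` where `H = ⟨g^n⟩`. -/
def inCoset {F : Type*} [Field F] (g : F) (q n k : ℕ) (x : F) : Prop :=
  ∃ j : ℕ, x = g ^ dq q k * (g ^ n) ^ j

/-- `T ⊆ F^m` is an `R`-subgroup: an additive subgroup closed under the
componentwise Dickson nearfield scalar multiplication `circ` on the right. -/
def IsRSubgroup {F : Type*} [Field F] {m : ℕ} (circ : F → F → F)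
    (T : Set (Fin m → F)) : Prop :=
  0 ∈ T ∧ (∀ a ∈ T, ∀ b ∈ T, a + b ∈ T) ∧ (∀ a ∈ T, -a ∈ T) ∧
    ∀ v ∈ T, ∀ r : F, (fun i => circ (v i) r) ∈ T


/-!
Away from the degenerate case `g = 0`, the Dickson conditions make `k ↦ [k]_q` a bijection from
`{1, …, n}` onto `ℤ/n`, so the cosets `g^[k]_q H` cover `F*` and `∘` is a nearfield
multiplication. Over a nearfield with `N` elements the nonzero vectors of an `R`-subgroup `T` fall
into lines `{v ∘ r | r ≠ 0}` of `N - 1` elements, so `N - 1 ∣ |T| - 1`; with `|T| ∣ N^m` this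
forces `|T| = N^k`. If `k ≤ 1`, `T` is generated by at most one vector, so `k ≥ 2`. Every element
of `gen {u, v}` is `(z (uᵢ, vᵢ))ᵢ` for a map `z : F × F → F` determined by `z (1, ·)` and
`z (0, 1)`, whence `|T| ≤ N^(N+1)`.
-/

lemma dq_add (q a b : ℕ) : dq q (a + b) = dq q a + q ^ a * dq q b := by
  simp only [dq, Finset.sum_range_add, pow_add, Finset.mul_sum]

lemma dq_mul (q a b : ℕ) : dq q (a * b) = dq q a * dq (q ^ a) b := by
  induction b with
  | zero => simp [dq]
  | succ b ih =>
    rw [Nat.mul_succ, dq_add, ih, dq, dq, dq, Finset.sum_range_succ, ← pow_mul]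
    ring

lemma dq_mul_sub_one (q n : ℕ) : dq q n * (q - 1) = q ^ n - 1 := by
  rcases q with _ | x
  · cases n <;> simp
  · simp [dq, ← geom_sum_mul_add x n]

lemma dq_modEq {p q : ℕ} (hq : q ≡ 1 [MOD p]) (d : ℕ) : dq q d ≡ d [MOD p] := by
  induction d with
  | zero => rfl
  | succ d ih => simpa [dq, Finset.sum_range_succ] using ih.add (hq.pow d)

lemma dvd_dq_iff_of_modEq_one {p q : ℕ} (hq : q ≡ 1 [MOD p]) (d : ℕ) : p ∣ dq q d ↔ p ∣ d := by
  rw [← Nat.modEq_zero_iff_dvd, ← Nat.modEq_zero_iff_dvd]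
  exact ⟨(dq_modEq hq d).symm.trans, (dq_modEq hq d).trans⟩

lemma sq_dvd_dq_sub {p q : ℕ} (hp : Odd p) (hq : p ∣ q - 1) (hq0 : 0 < q) :
    (p : ℤ) ^ 2 ∣ dq q p - p := by
  obtain ⟨b, hb⟩ := hq
  have hqb : (q : ℤ) = 1 + p * b := by omega
  simpa [dq, hqb] using odd_sq_dvd_geom_sum₂_sub (R := ℤ) (a := 1) (b := b) hp

namespace IsDicksonPair

variable {q n : ℕ}

lemma two_le (h : IsDicksonPair q n) : 2 ≤ q := by
  obtain ⟨p, l, hp, hl, rfl⟩ := h.2.2.1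
  exact hp.two_le.trans (Nat.le_self_pow hl.ne' p)

lemma modEq_one (h : IsDicksonPair q n) {p : ℕ} (hp : p.Prime) (hpn : p ∣ n) : q ≡ 1 [MOD p] :=
  ((Nat.modEq_iff_dvd' h.1).mpr (h.2.2.2.1 p hp hpn)).symm

lemma coprime (h : IsDicksonPair q n) : n.Coprime q := by
  refine Nat.coprime_of_dvd fun p hp hpn hpq => ?_
  have := (h.modEq_one hp hpn).symm.trans (Nat.modEq_zero_iff_dvd.mpr hpq)
  exact hp.one_lt.ne' (Nat.dvd_one.mp (Nat.modEq_zero_iff_dvd.mp this))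

lemma pow_div (h : IsDicksonPair q n) {d : ℕ} (hd : d ∣ n) :
    IsDicksonPair (q ^ d) (n / d) := by
  obtain ⟨hq, hn, ⟨p, l, hp, hl, rfl⟩, hdiv, h4⟩ := h
  have hd0 : 0 < d := Nat.pos_of_dvd_of_pos hd hn
  refine ⟨by positivity, Nat.div_pos (Nat.le_of_dvd hn hd) hd0,
    ⟨p, l * d, hp, Nat.mul_pos hl hd0, (pow_mul p l d).symm⟩, fun r hr hrn => ?_, fun h3 h4n => ?_⟩
  · exact (hdiv r hr (hrn.trans (Nat.div_dvd_of_dvd hd))).trans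
      (Nat.sub_one_dvd_pow_sub_one _ _)
  · refine h4 ?_ (h4n.trans (Nat.div_dvd_of_dvd hd))
    have hodd : Odd (p ^ l) := (Nat.odd_pow_iff hd0.ne').mp (Nat.odd_iff.mpr (by omega))
    rcases Nat.odd_mod_four_iff.mp (Nat.odd_iff.mp hodd) with h1 | h1
    · rw [Nat.pow_mod, h1, one_pow] at h3
      omega
    · exact h1

lemma not_sq_dvd_dq (h : IsDicksonPair q n) {p : ℕ} (hp : p.Prime) (hpn : p * p ∣ n) :
    ¬ p * p ∣ dq q p := by
  have hq := h.2.2.2.1 p hp ((Dvd.intro p rfl).trans hpn)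
  rcases hp.eq_two_or_odd' with rfl | hodd
  · have h4 : q % 4 ≠ 3 := fun h3 => h.2.2.2.2 h3 hpn
    simp only [dq, Finset.sum_range_succ, Finset.sum_range_zero, pow_zero, pow_one, zero_add]
    omega
  · intro hsq
    have := (Int.dvd_iff_dvd_of_dvd_sub (sq_dvd_dq_sub hodd hq h.1)).mp
      (by exact_mod_cast sq p ▸ hsq)
    have := Nat.le_of_dvd hp.pos (by exact_mod_cast this : p ^ 2 ∣ p)
    nlinarith [hp.two_le]

lemma coprime_div_dq (h : IsDicksonPair q n) {p : ℕ} (hp : p.Prime) (hpn : p ∣ n) :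
    (n / p).Coprime (dq q p / p) := by
  refine Nat.coprime_of_dvd fun r hr hrn hru => ?_
  have hrdq : r ∣ dq q p :=
    hru.trans (Nat.div_dvd_of_dvd ((dvd_dq_iff_of_modEq_one (h.modEq_one hp hpn) p).mpr dvd_rfl))
  have hrp : r ∣ p :=
    (dvd_dq_iff_of_modEq_one (h.modEq_one hr (hrn.trans (Nat.div_dvd_of_dvd hpn))) p).mp hrdq
  obtain rfl := (Nat.prime_dvd_prime_iff_eq hr hp).mp hrp
  refine h.not_sq_dvd_dq hr ?_ ?_
  · simpa [Nat.mul_div_cancel' hpn] using mul_dvd_mul_left r hrn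
  · simpa [Nat.mul_div_cancel' hrdq] using mul_dvd_mul_left r hru

theorem dvd_dq_iff (h : IsDicksonPair q n) (d : ℕ) : n ∣ dq q d ↔ n ∣ d := by
  induction n using Nat.strong_induction_on generalizing q d with
  | _ n ih =>
  rcases eq_or_ne n 1 with rfl | hn1
  · simp
  set p := n.minFac
  have hp : p.Prime := Nat.minFac_prime hn1
  have hpn : p ∣ n := Nat.minFac_dvd n
  have hpdq := dvd_dq_iff_of_modEq_one (h.modEq_one hp hpn)
  by_cases hpd : p ∣ d
  · obtain ⟨d', rfl⟩ := hpd
    obtain ⟨u, hu⟩ := (hpdq p).mpr dvd_rfl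
    have hcop : (n / p).Coprime u := by
      simpa [hu, hp.pos] using h.coprime_div_dq hp hpn
    have IH := ih (n / p) (Nat.div_lt_self h.2.1 hp.one_lt) (h.pow_div hpn) d'
    rw [dq_mul, hu, ← Nat.mul_div_cancel' hpn, mul_assoc, Nat.mul_dvd_mul_iff_left hp.pos,
      Nat.mul_dvd_mul_iff_left hp.pos, hcop.dvd_mul_left, IH]
  · exact iff_of_false (fun hdq => hpd ((hpdq d).mp (hpn.trans hdq)))
      fun hd => hpd (hpn.trans hd)

lemma dq_modEq_dq_iff (h : IsDicksonPair q n) {a b : ℕ} (hab : a ≤ b) :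
    dq q a ≡ dq q b [MOD n] ↔ a ≡ b [MOD n] := by
  obtain ⟨c, rfl⟩ := Nat.exists_eq_add_of_le hab
  rw [Nat.modEq_iff_dvd' (by rw [dq_add]; omega), Nat.modEq_iff_dvd' (by omega), dq_add,
    Nat.add_sub_cancel_left, Nat.add_sub_cancel_left, (h.coprime.pow_right a).dvd_mul_left,
    h.dvd_dq_iff]

lemma exists_dq_modEq (h : IsDicksonPair q n) (j : ℕ) :
    ∃ k, 1 ≤ k ∧ k ≤ n ∧ dq q k ≡ j [MOD n] := by
  have hn := h.2.1
  have key : ∀ a b, 1 ≤ a → b ≤ n → a ≤ b → dq q a ≡ dq q b [MOD n] → a = b := by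
    intro a b ha hb hab hdq
    have := (Nat.modEq_iff_dvd' hab).mp ((h.dq_modEq_dq_iff hab).mp hdq)
    have := Nat.eq_zero_of_dvd_of_lt this (by omega)
    omega
  have hinj : ∀ a b, a ∈ Finset.Icc 1 n → b ∈ Finset.Icc 1 n →
      dq q a % n = dq q b % n → a = b := by
    intro a b ha hb hab
    simp only [Finset.mem_Icc] at ha hb
    rcases le_total a b with hle | hle
    · exact key a b ha.1 hb.2 hle hab
    · exact (key b a hb.1 ha.2 hle hab.symm).symm
  obtain ⟨k, hk, hkj⟩ := Finset.surj_on_of_inj_on_of_card_le (fun k _ => dq q k % n)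
    (fun k _ => Finset.mem_range.mpr (Nat.mod_lt _ hn)) hinj (by simp) (j % n)
    (Finset.mem_range.mpr (Nat.mod_lt _ hn))
  exact ⟨k, (Finset.mem_Icc.mp hk).1, (Finset.mem_Icc.mp hk).2, hkj.symm⟩

lemma dvd_pow_sub_one (h : IsDicksonPair q n) : n ∣ q ^ n - 1 :=
  ((h.dvd_dq_iff n).mpr dvd_rfl).trans ⟨q - 1, (dq_mul_sub_one q n).symm⟩

end IsDicksonPair

section Coset

variable {F : Type*} [Field F] {g : F} {q n : ℕ}

lemma inCoset_mul_pow {a b : ℕ} {x y : F} (hx : inCoset g q n a x) (hy : inCoset g q n b y) :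
    inCoset g q n (a + b) (x * y ^ q ^ a) := by
  obtain ⟨i, rfl⟩ := hx
  obtain ⟨j, rfl⟩ := hy
  exact ⟨i + j * q ^ a, by rw [dq_add]; ring⟩

lemma inCoset_of_inCoset_add (hn : n ∣ dq q n) {k : ℕ} {x : F} (hx : inCoset g q n (k + n) x) :
    inCoset g q n k x := by
  obtain ⟨w, hw⟩ := hn
  obtain ⟨j, rfl⟩ := hx
  exact ⟨q ^ k * w + j, by rw [dq_add, hw]; ring⟩

lemma IsDicksonPair.exists_inCoset_pow (h : IsDicksonPair q n) (hg : g ^ (q ^ n - 1) = 1)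
    (j : ℕ) : ∃ k, 1 ≤ k ∧ k ≤ n ∧ inCoset g q n k (g ^ j) := by
  obtain ⟨k, hk1, hkn, hkj⟩ := h.exists_dq_modEq j
  have hN : 1 ≤ q ^ n - 1 := by
    have := Nat.pow_le_pow_left h.two_le n
    have := Nat.le_self_pow h.2.1.ne' 2
    omega
  -- `j + (q ^ n - 1) * [k]_q` represents the same power of `g` and is `≡ [k]_q` modulo `n`.
  have hle : dq q k ≤ j + (q ^ n - 1) * dq q k := by nlinarith
  obtain ⟨t, ht⟩ : n ∣ j + (q ^ n - 1) * dq q k - dq q k :=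
    (Nat.modEq_iff_dvd' hle).mp (hkj.trans
      (Nat.ModEq.add_left j (Nat.modEq_zero_iff_dvd.mpr (h.dvd_pow_sub_one.mul_right _))).symm)
  refine ⟨k, hk1, hkn, t, ?_⟩
  calc g ^ j = g ^ j * (g ^ (q ^ n - 1)) ^ dq q k := by rw [hg, one_pow, mul_one]
    _ = g ^ (dq q k + n * t) := by rw [← pow_mul, ← pow_add, ← ht]; congr 1; omega
    _ = g ^ dq q k * (g ^ n) ^ t := by rw [pow_add, pow_mul]

end Coset

/-- A multiplication `circ` making `(F, +, circ)` a (left distributive) nearfield; on a finite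
set, left identity and inverses follow from these axioms. -/
structure IsNearfieldMul {F : Type*} [Field F] (circ : F → F → F) : Prop where
  zero_circ : ∀ a, circ 0 a = 0
  circ_one : ∀ x, circ x 1 = x
  circ_add : ∀ x a b, circ x (a + b) = circ x a + circ x b
  circ_assoc : ∀ x a b, circ (circ x a) b = circ x (circ a b)
  circ_injective : ∀ x, x ≠ 0 → Function.Injective (circ x)

lemma isNearfieldMul_mul {F : Type*} [Field F] : IsNearfieldMul (fun x y : F => x * y) where
  zero_circ := zero_mul
  circ_one := mul_one
  circ_add := mul_add
  circ_assoc := mul_assoc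
  circ_injective _ hx := mul_right_injective₀ hx

section DicksonMul

variable {F : Type*} [Field F] [Fintype F] {q n : ℕ}

lemma exists_ringHom_eq_pow_pow {p l : ℕ} (hp : p.Prime) (hcard : Fintype.card F = (p ^ l) ^ n)
    (k : ℕ) : ∃ φ : F →+* F, ∀ a, φ a = a ^ (p ^ l) ^ k := by
  have := Fact.mk hp
  have : CharP F p := charP_of_card_eq_prime_pow (hcard.trans (pow_mul p l n).symm)
  exact ⟨iterateFrobenius F p (l * k), fun a => by rw [iterateFrobenius_def, pow_mul]⟩

lemma pow_pow_add_of_card_eq (hcard : Fintype.card F = q ^ n) (a : F) (k : ℕ) :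
    a ^ q ^ (k + n) = a ^ q ^ k := by
  rw [pow_add, mul_comm, pow_mul, ← hcard, FiniteField.pow_card]

variable {g : F} {circ : F → F → F}

lemma circ_eq_mul_pow_of_inCoset (hcirc : ∀ k : ℕ, 1 ≤ k → k ≤ n → ∀ x : F, inCoset g q n k x →
      ∀ lam : F, circ x lam = x * lam ^ q ^ k) (hn : n ∣ dq q n) (hcard : Fintype.card F = q ^ n)
    {k : ℕ} (hk1 : 1 ≤ k) (hk : k ≤ 2 * n) {x : F} (hx : inCoset g q n k x) (a : F) :
    circ x a = x * a ^ q ^ k := by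
  by_cases hkn : k ≤ n
  · exact hcirc k hk1 hkn x hx a
  · obtain ⟨k', rfl⟩ : ∃ k', k = k' + n := ⟨k - n, by omega⟩
    rw [hcirc k' (by omega) (by omega) x (inCoset_of_inCoset_add hn hx),
      pow_pow_add_of_card_eq hcard]

lemma circ_assoc_of_inCoset (hcirc : ∀ k : ℕ, 1 ≤ k → k ≤ n → ∀ x : F, inCoset g q n k x →
      ∀ lam : F, circ x lam = x * lam ^ q ^ k) (hn : n ∣ dq q n) (hcard : Fintype.card F = q ^ n)
    {kx ka : ℕ} (hkx1 : 1 ≤ kx) (hkxn : kx ≤ n) (hka1 : 1 ≤ ka) (hkan : ka ≤ n) {x a : F}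
    (hxk : inCoset g q n kx x) (hak : inCoset g q n ka a) (b : F) :
    circ (circ x a) b = circ x (circ a b) := by
  rw [hcirc kx hkx1 hkxn x hxk a, hcirc ka hka1 hkan a hak b,
    hcirc kx hkx1 hkxn x hxk (a * b ^ q ^ ka),
    circ_eq_mul_pow_of_inCoset hcirc hn hcard (by omega) (by omega) (inCoset_mul_pow hxk hak) b]
  ring

theorem isNearfieldMul_of_dickson (hqn : IsDicksonPair q n) (hcard : Fintype.card F = q ^ n)
    (hg0 : g ≠ 0) (hg : ∀ x : F, x ≠ 0 → ∃ j : ℕ, x = g ^ j) (hcirc0 : ∀ lam : F, circ 0 lam = 0)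
    (hcirc : ∀ k : ℕ, 1 ≤ k → k ≤ n → ∀ x : F, inCoset g q n k x →
      ∀ lam : F, circ x lam = x * lam ^ q ^ k) :
    IsNearfieldMul circ := by
  have hn : n ∣ dq q n := (hqn.dvd_dq_iff n).mpr dvd_rfl
  have hcov : ∀ x : F, x ≠ 0 → ∃ k, 1 ≤ k ∧ k ≤ n ∧ inCoset g q n k x := fun x hx => by
    obtain ⟨j, rfl⟩ := hg x hx
    exact hqn.exists_inCoset_pow (hcard ▸ FiniteField.pow_card_sub_one_eq_one g hg0) j
  have hφ : ∀ x, ∃ φ : F →+* F, ∀ a, circ x a = x * φ a := by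
    intro x
    rcases eq_or_ne x 0 with rfl | hx
    · exact ⟨RingHom.id F, fun a => by rw [hcirc0, zero_mul]⟩
    · obtain ⟨k, hk1, hkn, hxk⟩ := hcov x hx
      obtain ⟨p, l, hp, -, rfl⟩ := hqn.2.2.1
      obtain ⟨φ, hφ⟩ := exists_ringHom_eq_pow_pow hp hcard k
      exact ⟨φ, fun a => by rw [hcirc k hk1 hkn x hxk, hφ]⟩
  have hzero : ∀ x, circ x 0 = 0 := fun x => by
    obtain ⟨φ, hφ⟩ := hφ x
    rw [hφ, map_zero, mul_zero]
  refine ⟨hcirc0, fun x => ?_, fun x a b => ?_, fun x a b => ?_, fun x hx a b hab => ?_⟩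
  · obtain ⟨φ, hφ⟩ := hφ x
    rw [hφ, map_one, mul_one]
  · obtain ⟨φ, hφ⟩ := hφ x
    rw [hφ, hφ, hφ, map_add, mul_add]
  · rcases eq_or_ne x 0 with rfl | hx
    · simp only [hcirc0]
    rcases eq_or_ne a 0 with rfl | ha
    · rw [hzero, hcirc0, hzero]
    obtain ⟨kx, hkx1, hkxn, hxk⟩ := hcov x hx
    obtain ⟨ka, hka1, hkan, hak⟩ := hcov a ha
    exact circ_assoc_of_inCoset hcirc hn hcard hkx1 hkxn hka1 hkan hxk hak b
  · obtain ⟨φ, hφ⟩ := hφ x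
    rw [hφ, hφ] at hab
    exact φ.injective (mul_left_cancel₀ hx hab)

end DicksonMul

namespace IsNearfieldMul

variable {F : Type*} [Field F] {circ : F → F → F}

lemma circ_zero (hR : IsNearfieldMul circ) (x : F) : circ x 0 = 0 := by
  have h := hR.circ_add x 0 0
  rwa [add_zero, left_eq_add] at h

lemma circ_neg (hR : IsNearfieldMul circ) (x a : F) : circ x (-a) = -circ x a :=
  eq_neg_of_add_eq_zero_left (by rw [← hR.circ_add, neg_add_cancel, hR.circ_zero])

lemma circ_surjective [Finite F] (hR : IsNearfieldMul circ) {x : F} (hx : x ≠ 0) :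
    Function.Surjective (circ x) :=
  Finite.injective_iff_surjective.mp (hR.circ_injective x hx)

end IsNearfieldMul

section Lines

variable {F : Type*} [Fintype F] {circ : F → F → F} {ι : Type*} [DecidableEq (ι → F)]

def line (circ : F → F → F) (v : ι → F) : Finset (ι → F) :=
  Finset.univ.image fun r i => circ (v i) r

lemma mem_line (v : ι → F) (r : F) : (fun i => circ (v i) r) ∈ line circ v :=
  Finset.mem_image_of_mem _ (Finset.mem_univ r)

lemma IsNearfieldMul.self_mem_line [Field F] (hR : IsNearfieldMul circ) (v : ι → F) :
    v ∈ line circ v := by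
  simpa only [hR.circ_one] using mem_line (circ := circ) v 1

lemma IsNearfieldMul.zero_mem_line [Field F] (hR : IsNearfieldMul circ) (v : ι → F) :
    0 ∈ line circ v := by
  rw [show (0 : ι → F) = fun i => circ (v i) 0 from funext fun i => (hR.circ_zero _).symm]
  exact mem_line v 0

lemma IsNearfieldMul.card_line [Field F] (hR : IsNearfieldMul circ) {v : ι → F} (hv : v ≠ 0) :
    (line circ v).card = Fintype.card F := by
  obtain ⟨i, hi⟩ := Function.ne_iff.mp hv
  rw [line, Finset.card_image_of_injective _ fun r s hrs =>
    hR.circ_injective _ hi (congrFun hrs i), Finset.card_univ]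

lemma IsNearfieldMul.line_eq_of_mem [Field F] (hR : IsNearfieldMul circ) {v w : ι → F}
    (hw : w ∈ line circ v) (hw0 : w ≠ 0) : line circ w = line circ v := by
  obtain ⟨r, -, rfl⟩ := Finset.mem_image.mp hw
  have hr : r ≠ 0 := by
    rintro rfl
    exact hw0 (funext fun i => hR.circ_zero _)
  ext y
  simp only [line, Finset.mem_image, Finset.mem_univ, true_and]
  constructor
  · rintro ⟨s, rfl⟩
    exact ⟨circ r s, funext fun i => (hR.circ_assoc _ _ _).symm⟩
  · rintro ⟨t, rfl⟩
    obtain ⟨s, rfl⟩ := hR.circ_surjective hr t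
    exact ⟨s, funext fun i => hR.circ_assoc _ _ _⟩

end Lines

section RSubgroup

variable {F : Type*} [Field F] {circ : F → F → F} {m : ℕ} {T : Set (Fin m → F)}

lemma IsRSubgroup.line_subset [Fintype F] [DecidableEq (Fin m → F)] (hT : IsRSubgroup circ T)
    {v : Fin m → F} (hv : v ∈ T) : ↑(line circ v) ⊆ T := by
  intro y hy
  obtain ⟨r, -, rfl⟩ := Finset.mem_image.mp (Finset.mem_coe.mp hy)
  exact hT.2.2.2 v hv r

/-- The nonzero elements of `T` are partitioned into lines, each with `|F| - 1` of them. -/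
lemma IsNearfieldMul.card_sub_one_dvd_ncard_sub_one [Fintype F] (hR : IsNearfieldMul circ)
    (hT : IsRSubgroup circ T) : Fintype.card F - 1 ∣ T.ncard - 1 := by
  classical
  set S := (Set.toFinite T).toFinset.erase 0
  have hS : S.card = T.ncard - 1 := by
    rw [Finset.card_erase_of_mem ((Set.toFinite T).mem_toFinset.mpr hT.1),
      Set.ncard_eq_toFinset_card T]
  have hfiber : ∀ L ∈ S.image (line circ),
      (S.filter fun w => line circ w = L).card = Fintype.card F - 1 := by
    intro L hL
    obtain ⟨v, hv, rfl⟩ := Finset.mem_image.mp hL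
    have hv0 : v ≠ 0 := Finset.ne_of_mem_erase hv
    have hvT : v ∈ T := (Set.toFinite T).mem_toFinset.mp (Finset.mem_of_mem_erase hv)
    rw [← hR.card_line hv0, ← Finset.card_erase_of_mem (hR.zero_mem_line v)]
    congr 1
    ext w
    simp only [S, Finset.mem_filter, Finset.mem_erase, Set.Finite.mem_toFinset]
    constructor
    · rintro ⟨⟨hw0, -⟩, hwv⟩
      exact ⟨hw0, hwv ▸ hR.self_mem_line w⟩
    · rintro ⟨hw0, hwv⟩
      exact ⟨⟨hw0, hT.line_subset hvT hwv⟩, hR.line_eq_of_mem hwv hw0⟩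
  have key := Finset.card_eq_sum_card_fiberwise (f := line circ) (s := S)
    (t := S.image (line circ)) fun x hx => Finset.mem_image_of_mem _ hx
  rw [Finset.sum_const_nat hfiber] at key
  exact ⟨_, by rw [← hS, key, mul_comm]⟩

def IsRSubgroup.toAddSubgroup (hT : IsRSubgroup circ T) : AddSubgroup (Fin m → F) where
  carrier := T
  zero_mem' := hT.1
  add_mem' ha hb := hT.2.1 _ ha _ hb
  neg_mem' ha := hT.2.2.1 _ ha

lemma IsRSubgroup.ncard_dvd [Fintype F] (hT : IsRSubgroup circ T) :
    T.ncard ∣ Fintype.card F ^ m := by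
  have := AddSubgroup.card_addSubgroup_dvd_card hT.toAddSubgroup
  rw [Nat.card_fun, Nat.card_fin, Nat.card_eq_fintype_card (α := F)] at this
  exact this

end RSubgroup

lemma eq_pow_of_dvd_pow_of_sub_one_dvd {N t m : ℕ} (hN : IsPrimePow N) (ht : t ∣ N ^ m)
    (h : N - 1 ∣ t - 1) : ∃ k, t = N ^ k := by
  obtain ⟨p, a, hp, -, rfl⟩ := hN
  have hp := Nat.prime_iff.mpr hp
  rw [← pow_mul] at ht
  obtain ⟨e, -, rfl⟩ := (Nat.dvd_prime_pow hp).mp ht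
  have hgcd := Nat.pow_sub_one_gcd_pow_sub_one p a e
  rw [Nat.gcd_eq_left h] at hgcd
  have := Nat.pow_right_injective hp.two_le
    (Nat.sub_one_cancel (pow_pos hp.pos _) (pow_pos hp.pos _) hgcd)
  obtain ⟨k, rfl⟩ := Nat.gcd_eq_left_iff_dvd.mp this.symm
  exact ⟨k, pow_mul p a k⟩

section Seed

variable {F : Type*} [Field F] {circ : F → F → F} {m : ℕ}

lemma IsNearfieldMul.exists_ncard_eq_pow [Fintype F] (hR : IsNearfieldMul circ)
    {T : Set (Fin m → F)} (hT : IsRSubgroup circ T) : ∃ k, T.ncard = Fintype.card F ^ k :=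
  eq_pow_of_dvd_pow_of_sub_one_dvd (FiniteField.isPrimePow_card F) hT.ncard_dvd
    (hR.card_sub_one_dvd_ncard_sub_one hT)

def IsRSubgroupClosure (circ : F → F → F) (gen : Set (Fin m → F) → Set (Fin m → F)) : Prop :=
  ∀ V : Set (Fin m → F), IsRSubgroup circ (gen V) ∧ V ⊆ gen V ∧
    ∀ S : Set (Fin m → F), IsRSubgroup circ S → V ⊆ S → gen V ⊆ S

variable {gen : Set (Fin m → F) → Set (Fin m → F)}

lemma IsRSubgroupClosure.eq_of_subset (hgen : IsRSubgroupClosure circ gen)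
    {T V : Set (Fin m → F)} (hT : IsRSubgroup circ T) (hVT : V ⊆ T) (hTV : T ⊆ gen V) :
    gen V = T :=
  ((hgen V).2.2 T hT hVT).antisymm hTV

lemma IsNearfieldMul.exists_gen_eq_of_ncard_le [Fintype F] (hR : IsNearfieldMul circ)
    (hgen : IsRSubgroupClosure circ gen) {T : Set (Fin m → F)} (hT : IsRSubgroup circ T)
    (hcard : T.ncard ≤ Fintype.card F) :
    ∃ W : Finset (Fin m → F), W.card ≤ 1 ∧ gen ↑W = T := by
  classical
  by_cases hT0 : ∃ w ∈ T, w ≠ 0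
  · obtain ⟨w, hw, hw0⟩ := hT0
    refine ⟨{w}, (Finset.card_singleton w).le, hgen.eq_of_subset hT (by simpa using hw) ?_⟩
    have hline : (line circ w : Set (Fin m → F)) = T :=
      Set.eq_of_subset_of_ncard_le (hT.line_subset hw)
        (by rw [Set.ncard_coe_finset, hR.card_line hw0]; exact hcard) (Set.toFinite T)
    rw [← hline, Finset.coe_singleton]
    exact (hgen {w}).1.line_subset ((hgen {w}).2.1 rfl)
  · simp only [not_exists, not_and, not_not] at hT0
    refine ⟨∅, by simp, hgen.eq_of_subset hT (by simp) fun w hw => ?_⟩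
    rw [hT0 w hw]
    exact (hgen _).1.1

/-- The maps `z : F × F → F` such that `(z (u i, v i))ᵢ` ranges over an `R`-subgroup containing
`u` and `v`; such a `z` is determined by `z (1, ·)` and `z (0, 1)`, as every pair is
`(x, x ∘ a)` or `(0, y)`. -/
def IsRCompatible (circ : F → F → F) (z : F × F → F) : Prop :=
  (∀ x a, z (x, circ x a) = circ x (z (1, a))) ∧ ∀ y, z (0, y) = circ y (z (0, 1))

lemma IsNearfieldMul.isRSubgroup_image_isRCompatible (hR : IsNearfieldMul circ)
    (u v : Fin m → F) :
    IsRSubgroup circ ((fun z i => z (u i, v i)) '' {z | IsRCompatible circ z}) := by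
  refine ⟨⟨0, ⟨fun x a => ?_, fun y => ?_⟩, rfl⟩, ?_, ?_, ?_⟩
  · simp [hR.circ_zero]
  · simp [hR.circ_zero]
  · rintro _ ⟨z, hz, rfl⟩ _ ⟨w, hw, rfl⟩
    exact ⟨z + w, ⟨fun x a => by simp [hz.1, hw.1, hR.circ_add],
      fun y => by simp [hz.2 y, hw.2 y, hR.circ_add]⟩, rfl⟩
  · rintro _ ⟨z, hz, rfl⟩
    exact ⟨-z, ⟨fun x a => by simp [hz.1, hR.circ_neg], fun y => by simp [hz.2 y, hR.circ_neg]⟩,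
      rfl⟩
  · rintro _ ⟨z, hz, rfl⟩ r
    exact ⟨fun p => circ (z p) r, ⟨fun x a => by simp only [hz.1, hR.circ_assoc],
      fun y => by simp only [hz.2 y, hR.circ_assoc]⟩, rfl⟩

lemma IsNearfieldMul.isRCompatible_ext [Finite F] (hR : IsNearfieldMul circ) {z w : F × F → F}
    (hz : IsRCompatible circ z) (hw : IsRCompatible circ w) (h1 : ∀ a, z (1, a) = w (1, a))
    (h0 : z (0, 1) = w (0, 1)) : z = w := by
  funext ⟨x, y⟩
  rcases eq_or_ne x 0 with rfl | hx
  · rw [hz.2, hw.2, h0]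
  · obtain ⟨a, rfl⟩ := hR.circ_surjective hx y
    rw [hz.1, hw.1, h1]

lemma IsNearfieldMul.ncard_isRCompatible_le [Fintype F] (hR : IsNearfieldMul circ) :
    {z | IsRCompatible circ z}.ncard ≤ Fintype.card F ^ (Fintype.card F + 1) := by
  classical
  have hinj : Set.InjOn (fun z : F × F → F => (fun a => z (1, a), z (0, 1)))
      {z | IsRCompatible circ z} := fun z hz w hw h =>
    hR.isRCompatible_ext hz hw (congrFun (congrArg Prod.fst h)) (congrArg Prod.snd h)
  calc {z | IsRCompatible circ z}.ncard ≤ (Set.univ : Set ((F → F) × F)).ncard :=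
        Set.ncard_le_ncard_of_injOn _ (fun _ _ => Set.mem_univ _) hinj Set.finite_univ
    _ = Fintype.card F ^ (Fintype.card F + 1) := by
        rw [Set.ncard_univ, Nat.card_eq_fintype_card, Fintype.card_prod, Fintype.card_fun,
          pow_succ]

lemma IsNearfieldMul.ncard_gen_pair_le [Fintype F] (hR : IsNearfieldMul circ)
    (hgen : IsRSubgroupClosure circ gen) (u v : Fin m → F) :
    (gen {u, v}).ncard ≤ Fintype.card F ^ (Fintype.card F + 1) := by
  have hsub : gen {u, v} ⊆ (fun z i => z (u i, v i)) '' {z | IsRCompatible circ z} := by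
    refine (hgen _).2.2 _ (hR.isRSubgroup_image_isRCompatible u v) ?_
    rintro _ (rfl | rfl)
    · exact ⟨Prod.fst, ⟨fun x a => (hR.circ_one x).symm, fun y => (hR.circ_zero y).symm⟩, rfl⟩
    · exact ⟨Prod.snd, ⟨fun x a => rfl, fun y => (hR.circ_one y).symm⟩, rfl⟩
  calc (gen {u, v}).ncard
      ≤ ((fun z i => z (u i, v i)) '' {z | IsRCompatible circ z}).ncard :=
        Set.ncard_le_ncard hsub (Set.toFinite _)
    _ ≤ {z | IsRCompatible circ z}.ncard := Set.ncard_image_le (Set.toFinite _)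
    _ ≤ _ := hR.ncard_isRCompatible_le

theorem IsNearfieldMul.exists_ncard_eq_pow_of_seed_two [Fintype F] (hR : IsNearfieldMul circ)
    (hgen : IsRSubgroupClosure circ gen) {T : Set (Fin m → F)}
    (hseed : (∃ V : Finset (Fin m → F), V.card = 2 ∧ gen ↑V = T) ∧
      ∀ V : Finset (Fin m → F), gen ↑V = T → 2 ≤ V.card) :
    ∃ k, 2 ≤ k ∧ k ≤ Fintype.card F + 1 ∧ T.ncard = Fintype.card F ^ k := by
  classical
  obtain ⟨⟨V, hV, rfl⟩, hmin⟩ := hseed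
  have hT := (hgen V).1
  obtain ⟨k, hk⟩ := hR.exists_ncard_eq_pow hT
  have hF : 1 < Fintype.card F := Fintype.one_lt_card
  refine ⟨k, ?_, ?_, hk⟩
  · by_contra! hk1
    obtain ⟨W, hW, hWV⟩ := hR.exists_gen_eq_of_ncard_le hgen hT
      (hk ▸ (Nat.pow_le_pow_right hF.le (by omega)).trans_eq (pow_one _))
    have := hmin W hWV
    omega
  · obtain ⟨u, v, -, huv⟩ := Finset.card_eq_two.mp hV
    rw [← Nat.pow_le_pow_iff_right hF, ← hk, huv, Finset.coe_pair]
    exact hR.ncard_gen_pair_le hgen u v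

end Seed

section TwoElements

variable {F : Type*} [Field F] {circ : F → F → F} {m : ℕ}

lemma isRSubgroup_iff_of_forall_eq_zero_or_one (hF : ∀ x : F, x = 0 ∨ x = 1)
    (hc : ∀ a, circ 0 a = 0) {T : Set (Fin m → F)} :
    IsRSubgroup circ T ↔ 0 ∈ T ∧ (∀ a ∈ T, ∀ b ∈ T, a + b ∈ T) ∧ (∀ a ∈ T, -a ∈ T) := by
  refine ⟨fun h => ⟨h.1, h.2.1, h.2.2.1⟩, fun h => ⟨h.1, h.2.1, h.2.2, fun v hv r => ?_⟩⟩
  rcases hF (circ 1 r) with hr | hr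
  · convert h.1 using 1
    funext i
    rcases hF (v i) with hv | hv <;> simp [hv, hr, hc]
  · convert hv using 1
    funext i
    rcases hF (v i) with hv | hv <;> simp [hv, hr, hc]

lemma isRSubgroup_eq_of_forall_eq_zero_or_one (hF : ∀ x : F, x = 0 ∨ x = 1)
    (hc : ∀ a, circ 0 a = 0) : IsRSubgroup (m := m) circ = IsRSubgroup fun x y => x * y :=
  funext fun _ => propext <| (isRSubgroup_iff_of_forall_eq_zero_or_one hF hc).trans
    (isRSubgroup_iff_of_forall_eq_zero_or_one hF zero_mul).symm

end TwoElements

theorem Rdim_le_of_seed_number_two_general {F : Type*} [Field F] [Fintype F]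
    (q n : ℕ) (hqn : IsDicksonPair q n)
    (hcard : Fintype.card F = q ^ n)
    (g : F) (hg : ∀ x : F, x ≠ 0 → ∃ j : ℕ, x = g ^ j)
    (circ : F → F → F)
    (hcirc0 : ∀ lam : F, circ 0 lam = 0)
    (hcirc : ∀ k : ℕ, 1 ≤ k → k ≤ n → ∀ x : F, inCoset g q n k x →
      ∀ lam : F, circ x lam = x * lam ^ q ^ k)
    (m : ℕ)
    (gen : Set (Fin m → F) → Set (Fin m → F))
    (hgen : ∀ V : Set (Fin m → F), IsRSubgroup circ (gen V) ∧ V ⊆ gen V ∧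
      ∀ S : Set (Fin m → F), IsRSubgroup circ S → V ⊆ S → gen V ⊆ S)
    (T : Set (Fin m → F))
    (hseed : (∃ V : Finset (Fin m → F), V.card = 2 ∧ gen ↑V = T) ∧
      ∀ V : Finset (Fin m → F), gen ↑V = T → 2 ≤ V.card) :
    ∃ k : ℕ, 2 ≤ k ∧ k ≤ q ^ n + 1 ∧ T.ncard = (q ^ n) ^ k := by
  rw [← hcard]
  by_cases hg0 : g = 0
  · -- then `F = {0, 1}`, where the R-subgroups are those of the field multiplication
    have hF : ∀ x : F, x = 0 ∨ x = 1 := fun x => or_iff_not_imp_left.mpr fun hx => by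
      obtain ⟨_ | j, rfl⟩ := hg x hx
      · exact pow_zero g
      · simp [hg0] at hx
    rw [isRSubgroup_eq_of_forall_eq_zero_or_one hF hcirc0] at hgen
    exact isNearfieldMul_mul.exists_ncard_eq_pow_of_seed_two hgen hseed
  · exact (isNearfieldMul_of_dickson hqn hcard hg0 hg hcirc0 hcirc).exists_ncard_eq_pow_of_seed_two
      hgen hseed

/-- Dickson nearfield setup: if an `R`-subgroup `T` of `F^m` has seed number `2`
(`gen` sends a set of vectors to the smallest `R`-subgroup containing it), then
`|T| = (q^n)^k` for some `k` (the `R`-dimension) with `2 ≤ k ≤ q^n + 1`. -/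
theorem Rdim_le_of_seed_number_two {F : Type*} [Field F] [Fintype F]
    (q n : ℕ) (hqn : IsDicksonPair q n)
    (hcard : Fintype.card F = q ^ n)
    (g : F) (hg : ∀ x : F, x ≠ 0 → ∃ j : ℕ, x = g ^ j)
    (circ : F → F → F)
    (hcirc0 : ∀ lam : F, circ 0 lam = 0)
    (hcirc : ∀ k : ℕ, 1 ≤ k → k ≤ n → ∀ x : F, inCoset g q n k x →
      ∀ lam : F, circ x lam = x * lam ^ q ^ k)
    (m : ℕ) (hm : 0 < m)
    (gen : Set (Fin m → F) → Set (Fin m → F))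
    (hgen : ∀ V : Set (Fin m → F), IsRSubgroup circ (gen V) ∧ V ⊆ gen V ∧
      ∀ S : Set (Fin m → F), IsRSubgroup circ S → V ⊆ S → gen V ⊆ S)
    (T : Set (Fin m → F)) (hT : IsRSubgroup circ T)
    (hseed : (∃ V : Finset (Fin m → F), V.card = 2 ∧ gen ↑V = T) ∧
      ∀ V : Finset (Fin m → F), gen ↑V = T → 2 ≤ V.card) :
    ∃ k : ℕ, 2 ≤ k ∧ k ≤ q ^ n + 1 ∧ T.ncard = (q ^ n) ^ k :=
  Rdim_le_of_seed_number_two_general q n hqn hcard g hg circ hcirc0 hcirc m gen hgen T hseed
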